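/- Let p be a positive integer, let g, h : ℝ^p → ℝ be convex, let f : ℝ^p → ℝ be convex and L-smooth with L > 0, and let 0 < γ < 2/L. Let y* ∈ ℝ^p be a fixed point, i.e., there is x* ∈ ℝ^p such that x* is a proximal point of g at y* with parameter γ and x* is a proximal point of h at 2x* − y* − γ∇f(x*) with parameter γ. Let sequences (y_k), (x_k), (z_k) in ℝ^p satisfy, for every k ≥ 0: (x_k, z_k) is a three-operator splitting step from y_k, and y_{k+1} = y_k − x_k + z_k. Then with G_k = (x_k − z_k)/γ, for every integer k ≥ 0 one has ‖G_k‖² ≤ 2‖y_0 − y*‖² / (γ²(2 − γL)(k + 1)). -/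

import Mathlib

open RealInnerProductSpace

/-- `x` is a proximal point of `φ` at `y` with parameter `γ`:
it minimizes `u ↦ φ u + (1/(2γ)) ‖u - y‖²`. -/
def IsProxPt {p : ℕ} (γ : ℝ) (φ : EuclideanSpace ℝ (Fin p) → ℝ)
    (y x : EuclideanSpace ℝ (Fin p)) : Prop :=
  ∀ u : EuclideanSpace ℝ (Fin p),
    φ x + (1 / (2 * γ)) * ‖x - y‖ ^ 2 ≤ φ u + (1 / (2 * γ)) * ‖u - y‖ ^ 2

/-- `(x, z)` is a three-operator splitting step from `y`. -/
def IsSplitStep {p : ℕ} (γ : ℝ) (g h f : EuclideanSpace ℝ (Fin p) → ℝ)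
    (y x z : EuclideanSpace ℝ (Fin p)) : Prop :=
  IsProxPt γ g y x ∧ IsProxPt γ h ((2 : ℝ) • x - y - γ • gradient f x) z

/-- `f` is `L`-smooth: differentiable with `L`-Lipschitz gradient. -/
def LSmooth {p : ℕ} (L : ℝ) (f : EuclideanSpace ℝ (Fin p) → ℝ) : Prop :=
  Differentiable ℝ f ∧ ∀ a b : EuclideanSpace ℝ (Fin p),
    ‖gradient f a - gradient f b‖ ≤ L * ‖a - b‖

/-- `u` is a subgradient of `φ` at `x`. -/
def IsSubgradient {p : ℕ} (φ : EuclideanSpace ℝ (Fin p) → ℝ)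
    (x u : EuclideanSpace ℝ (Fin p)) : Prop :=
  ∀ w : EuclideanSpace ℝ (Fin p), φ w ≥ φ x + ⟪u, w - x⟫

/-!
The operator `y ↦ y - x + z` of a splitting step is averaged. Comparing two steps from `y` and
`y'`, the prox points give subgradients of `g` and `h`, whose monotonicity together with the
Baillon–Haddad cocoercivity of `∇f` yields
`‖T y - T y'‖² ≤ ‖y - y'‖² - (2 - γL)/2 ‖(x - z) - (x' - z')‖²`.
Against the fixed point `y*` this makes `‖y_k - y*‖²` drop by `(2 - γL)/2 ‖x_k - z_k‖²` per step;
against the previous iterate (where `y_{k+1} - y_k = z_k - x_k`) it makes `‖x_k - z_k‖`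
nonincreasing. Summing the drops gives `(k + 1) (2 - γL)/2 ‖x_k - z_k‖² ≤ ‖y_0 - y*‖²`.
-/

open Filter Topology
open scoped Gradient

section InnerProduct

variable {F : Type*} [NormedAddCommGroup F] [InnerProductSpace ℝ F]

-- In the application `d, a, b, Δ` are the differences of `y, x, z, ∇f x` between two steps.
theorem norm_sub_sq_le_of_inner_nonneg {γ L : ℝ} (hγ : 0 ≤ γ) (hL : 0 < L) {d a b Δ : F}
    (ha : 0 ≤ ⟪d - a, a⟫) (hb : 0 ≤ ⟪(2 : ℝ) • a - d - γ • Δ - b, b⟫)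
    (hΔ : ‖Δ‖ ^ 2 ≤ L * ⟪Δ, a⟫) :
    ‖d - (a - b)‖ ^ 2 ≤ ‖d‖ ^ 2 - (2 - γ * L) / 2 * ‖a - b‖ ^ 2 := by
  have hsum : ⟪d - a, a⟫ + ⟪(2 : ℝ) • a - d - γ • Δ - b, b⟫
      = ⟪d, a - b⟫ - ‖a - b‖ ^ 2 - γ * ⟪Δ, a⟫ + γ * ⟪Δ, a - b⟫ := by
    simp only [← real_inner_self_eq_norm_sq, inner_sub_left, inner_sub_right,
      real_inner_smul_left, two_smul, inner_add_left, real_inner_comm b a]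
    ring
  have hsq : 0 ≤ 4 * ‖Δ‖ ^ 2 - 4 * L * ⟪Δ, a - b⟫ + L ^ 2 * ‖a - b‖ ^ 2 := by
    have := sq_nonneg ‖(2 : ℝ) • Δ - L • (a - b)‖
    rw [norm_sub_sq_real ((2 : ℝ) • Δ)] at this
    simp only [norm_smul, mul_pow, Real.norm_eq_abs, sq_abs,
      real_inner_smul_left, real_inner_smul_right] at this
    linarith
  have hγΔ : γ * ‖Δ‖ ^ 2 ≤ γ * (L * ⟪Δ, a⟫) := mul_le_mul_of_nonneg_left hΔ hγ
  have hγsq := mul_nonneg hγ hsq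
  rw [norm_sub_sq_real]
  suffices L * (2 * γ * (⟪Δ, a - b⟫ - ⟪Δ, a⟫)) ≤ L * (γ * L / 2 * ‖a - b‖ ^ 2) by
    have := le_of_mul_le_mul_left this hL
    linarith
  linarith

variable [CompleteSpace F] {f : F → ℝ}

theorem hasDerivAt_comp_lineMap (hf : Differentiable ℝ f) (a b : F) (t : ℝ) :
    HasDerivAt (fun s => f (AffineMap.lineMap a b s))
      ⟪∇ f (AffineMap.lineMap a b t), b - a⟫ t :=
  (hf _).hasGradientAt.hasFDerivAt.comp_hasDerivAt t AffineMap.hasDerivAt_lineMap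

theorem ConvexOn.add_inner_gradient_le (hconv : ConvexOn ℝ Set.univ f)
    (hf : Differentiable ℝ f) (x w : F) : f x + ⟪∇ f x, w - x⟫ ≤ f w := by
  have hline : ConvexOn ℝ Set.univ (f ∘ AffineMap.lineMap x w) := hconv.comp_affineMap _
  have hderiv := hasDerivAt_comp_lineMap hf x w 0
  rw [AffineMap.lineMap_apply_zero] at hderiv
  have := hline.le_slope_of_hasDerivAt (Set.mem_univ 0) (Set.mem_univ 1) zero_lt_one hderiv
  simp only [slope_def_field, Function.comp_apply, AffineMap.lineMap_apply_zero,
    AffineMap.lineMap_apply_one, sub_zero, div_one] at this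
  linarith

theorem le_add_inner_gradient_add_mul_norm_sq (hf : Differentiable ℝ f) {L : ℝ}
    (hlip : ∀ a b, ‖∇ f a - ∇ f b‖ ≤ L * ‖a - b‖) (a b : F) :
    f b ≤ f a + ⟪∇ f a, b - a⟫ + L / 2 * ‖b - a‖ ^ 2 := by
  set ψ : ℝ → ℝ := fun t =>
    f (AffineMap.lineMap a b t) - t * ⟪∇ f a, b - a⟫ - L / 2 * t ^ 2 * ‖b - a‖ ^ 2
  have hψ : ∀ t, HasDerivAt ψ
      (⟪∇ f (AffineMap.lineMap a b t) - ∇ f a, b - a⟫ - L * t * ‖b - a‖ ^ 2) t := by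
    intro t
    refine (((hasDerivAt_comp_lineMap hf a b t).sub
      ((hasDerivAt_id t).mul_const ⟪∇ f a, b - a⟫)).sub
      (((hasDerivAt_pow 2 t).const_mul (L / 2)).mul_const (‖b - a‖ ^ 2))).congr_deriv ?_
    rw [inner_sub_left]
    push_cast
    ring
  have hanti : AntitoneOn ψ (Set.Icc 0 1) := by
    refine antitoneOn_of_deriv_nonpos (convex_Icc 0 1)
      (fun t _ => (hψ t).continuousAt.continuousWithinAt)
      (fun t _ => (hψ t).differentiableAt.differentiableWithinAt) fun t ht => ?_
    rw [interior_Icc] at ht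
    have hdist : ‖AffineMap.lineMap a b t - a‖ = t * ‖b - a‖ := by
      rw [AffineMap.lineMap_apply_module', add_sub_cancel_right, norm_smul,
        Real.norm_of_nonneg ht.1.le]
    calc deriv ψ t
        ≤ ‖∇ f (AffineMap.lineMap a b t) - ∇ f a‖ * ‖b - a‖ - L * t * ‖b - a‖ ^ 2 := by
          rw [(hψ t).deriv]; gcongr; exact real_inner_le_norm _ _
      _ ≤ L * ‖AffineMap.lineMap a b t - a‖ * ‖b - a‖ - L * t * ‖b - a‖ ^ 2 := by
          gcongr; exact hlip _ _
      _ = 0 := by rw [hdist]; ring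
  have := hanti (Set.left_mem_Icc.2 zero_le_one) (Set.right_mem_Icc.2 zero_le_one) zero_le_one
  simp only [ψ, AffineMap.lineMap_apply_zero, AffineMap.lineMap_apply_one] at this
  linarith

theorem ConvexOn.norm_sq_gradient_sub_le (hconv : ConvexOn ℝ Set.univ f)
    (hf : Differentiable ℝ f) {L : ℝ} (hL : 0 < L)
    (hlip : ∀ a b, ‖∇ f a - ∇ f b‖ ≤ L * ‖a - b‖) (a b : F) :
    ‖∇ f b - ∇ f a‖ ^ 2 ≤ 2 * L * (f b - f a - ⟪∇ f a, b - a⟫) := by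
  set Δ := ∇ f b - ∇ f a
  -- test the two first-order bounds at the point reached by a gradient step from `b`
  have hupper := le_add_inner_gradient_add_mul_norm_sq hf hlip b (b - L⁻¹ • Δ)
  have hlower := hconv.add_inner_gradient_le hf a (b - L⁻¹ • Δ)
  have hΔ : ⟪∇ f b, Δ⟫ - ⟪∇ f a, Δ⟫ = ‖Δ‖ ^ 2 := by
    rw [← inner_sub_left, real_inner_self_eq_norm_sq]
  simp only [sub_sub_cancel_left, norm_neg, norm_smul, inner_neg_right, inner_sub_right,
    real_inner_smul_right, Real.norm_of_nonneg (inv_nonneg.2 hL.le)] at hupper hlower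
  have key : ‖Δ‖ ^ 2 / (2 * L) ≤ f b - f a - ⟪∇ f a, b - a⟫ := by
    have e : ‖Δ‖ ^ 2 / (2 * L)
        = L⁻¹ * (⟪∇ f b, Δ⟫ - ⟪∇ f a, Δ⟫) - L / 2 * (L⁻¹ * ‖Δ‖) ^ 2 := by
      rw [hΔ]; field_simp; ring
    rw [e, inner_sub_right (∇ f a) b a]
    linarith
  rwa [div_le_iff₀ (by positivity), mul_comm] at key

theorem ConvexOn.norm_sq_gradient_sub_le_mul_inner (hconv : ConvexOn ℝ Set.univ f)
    (hf : Differentiable ℝ f) {L : ℝ} (hL : 0 < L)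
    (hlip : ∀ a b, ‖∇ f a - ∇ f b‖ ≤ L * ‖a - b‖) (a b : F) :
    ‖∇ f a - ∇ f b‖ ^ 2 ≤ L * ⟪∇ f a - ∇ f b, a - b⟫ := by
  have hab := hconv.norm_sq_gradient_sub_le hf hL hlip a b
  have hba := hconv.norm_sq_gradient_sub_le hf hL hlip b a
  rw [norm_sub_rev] at hab
  have e : ⟪∇ f a - ∇ f b, a - b⟫ = -⟪∇ f a, b - a⟫ - ⟪∇ f b, a - b⟫ := by
    simp only [inner_sub_left, inner_sub_right]; ring
  rw [e]
  linarith

end InnerProduct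

theorem nonneg_of_forall_mem_Ioc_nonneg_add_mul {a b : ℝ}
    (h : ∀ t ∈ Set.Ioc (0 : ℝ) 1, 0 ≤ a + t * b) : 0 ≤ a := by
  have hlim : Tendsto (fun t => a + t * b) (𝓝[>] 0) (𝓝 a) := by
    have hcont : Continuous fun t : ℝ => a + t * b := by fun_prop
    simpa using (hcont.tendsto 0).mono_left nhdsWithin_le_nhds
  exact ge_of_tendsto hlim (eventually_of_mem (Ioc_mem_nhdsGT one_pos) h)

section Prox

variable {p : ℕ} {γ : ℝ} {φ : EuclideanSpace ℝ (Fin p) → ℝ}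

theorem IsProxPt.isSubgradient (hγ : 0 < γ) (hφ : ConvexOn ℝ Set.univ φ)
    {y x : EuclideanSpace ℝ (Fin p)} (hx : IsProxPt γ φ y x) :
    IsSubgradient φ x (γ⁻¹ • (y - x)) := by
  intro w
  rw [ge_iff_le, real_inner_smul_left, ← sub_nonneg]
  set d := w - x
  -- compare the prox objective at `x` and at `x + t • d`, then let `t → 0⁺`
  refine nonneg_of_forall_mem_Ioc_nonneg_add_mul (b := ‖d‖ ^ 2 / (2 * γ)) fun t ht => ?_
  have hmin := hx (x + t • d)
  have hconv : φ (x + t • d) ≤ (1 - t) * φ x + t * φ w := by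
    have := hφ.2 (Set.mem_univ x) (Set.mem_univ w) (sub_nonneg.2 ht.2) ht.1.le (by ring)
    rwa [show (1 - t) • x + t • w = x + t • d by module] at this
  have hexpand : ‖x + t • d - y‖ ^ 2
      = ‖x - y‖ ^ 2 - 2 * t * ⟪y - x, d⟫ + t ^ 2 * ‖d‖ ^ 2 := by
    rw [show x + t • d - y = -(y - x) + t • d by module, norm_add_sq_real, norm_neg,
      inner_neg_left, real_inner_smul_right, norm_smul, Real.norm_of_nonneg ht.1.le,
      norm_sub_rev y x]
    ring
  rw [hexpand] at hmin
  have key : 0 ≤ t * (φ w - (φ x + γ⁻¹ * ⟪y - x, d⟫) + t * (‖d‖ ^ 2 / (2 * γ))) := by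
    have e : t * (φ w - (φ x + γ⁻¹ * ⟪y - x, d⟫) + t * (‖d‖ ^ 2 / (2 * γ)))
        = t * (φ w - φ x) + 1 / (2 * γ) * (t ^ 2 * ‖d‖ ^ 2 - 2 * t * ⟪y - x, d⟫) := by
      field_simp
      ring
    rw [e]
    linarith
  exact nonneg_of_mul_nonneg_right key ht.1

theorem IsSubgradient.inner_sub_nonneg {x x' u u' : EuclideanSpace ℝ (Fin p)}
    (hu : IsSubgradient φ x u) (hu' : IsSubgradient φ x' u') : 0 ≤ ⟪u - u', x - x'⟫ := by
  have h := hu x'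
  have h' := hu' x
  simp only [ge_iff_le, inner_sub_left, inner_sub_right] at h h' ⊢
  linarith

theorem IsProxPt.inner_sub_nonneg (hγ : 0 < γ) (hφ : ConvexOn ℝ Set.univ φ)
    {y x y' x' : EuclideanSpace ℝ (Fin p)} (hx : IsProxPt γ φ y x) (hx' : IsProxPt γ φ y' x') :
    0 ≤ ⟪(y - x) - (y' - x'), x - x'⟫ := by
  have h := (hx.isSubgradient hγ hφ).inner_sub_nonneg (hx'.isSubgradient hγ hφ)
  rwa [← smul_sub, real_inner_smul_left, mul_nonneg_iff_of_pos_left (inv_pos.2 hγ)] at h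

end Prox

theorem IsSplitStep.norm_sub_sq_le {p : ℕ} {γ L : ℝ} (hγ : 0 < γ) (hL : 0 < L)
    {g h f : EuclideanSpace ℝ (Fin p) → ℝ} (hg : ConvexOn ℝ Set.univ g)
    (hh : ConvexOn ℝ Set.univ h) (hf : ConvexOn ℝ Set.univ f) (hfL : LSmooth L f)
    {y x z y' x' z' : EuclideanSpace ℝ (Fin p)}
    (hs : IsSplitStep γ g h f y x z) (hs' : IsSplitStep γ g h f y' x' z') :
    ‖(y - x + z) - (y' - x' + z')‖ ^ 2
      ≤ ‖y - y'‖ ^ 2 - (2 - γ * L) / 2 * ‖(x - z) - (x' - z')‖ ^ 2 := by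
  have hgx := hs.1.inner_sub_nonneg hγ hg hs'.1
  have hhz := hs.2.inner_sub_nonneg hγ hh hs'.2
  have hfx := hf.norm_sq_gradient_sub_le_mul_inner hfL.1 hL hfL.2 x x'
  have := norm_sub_sq_le_of_inner_nonneg hγ.le hL
    (d := y - y') (b := z - z') (by convert hgx using 2; module)
    (by convert hhz using 2; module) hfx
  rwa [show y - x + z - (y' - x' + z') = y - y' - (x - x' - (z - z')) by module,
    show x - z - (x' - z') = x - x' - (z - z') by module]

theorem Antitone.add_one_mul_le_of_le_sub {a b : ℕ → ℝ} (hb : Antitone b) (ha : ∀ k, 0 ≤ a k)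
    (hab : ∀ k, a (k + 1) ≤ a k - b k) (k : ℕ) : ((k : ℝ) + 1) * b k ≤ a 0 := by
  suffices h : ∀ k : ℕ, ((k : ℝ) + 1) * b k ≤ a 0 - a (k + 1) by linarith [h k, ha (k + 1)]
  intro k
  induction k with
  | zero => norm_num; linarith [hab 0]
  | succ k ih =>
    have hmono : ((k : ℝ) + 1) * b (k + 1) ≤ ((k : ℝ) + 1) * b k :=
      mul_le_mul_of_nonneg_left (hb k.le_succ) (by positivity)
    push_cast
    linarith [hab (k + 1)]

theorem stmt_4_general (p : ℕ) (L : ℝ) (hL : 0 < L) (γ : ℝ)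
    (hγ : 0 < γ) (hγ2 : γ < 2 / L)
    (g h f : EuclideanSpace ℝ (Fin p) → ℝ)
    (hg : ConvexOn ℝ Set.univ g) (hh : ConvexOn ℝ Set.univ h)
    (hf : ConvexOn ℝ Set.univ f) (hfL : LSmooth L f)
    (ystar xstar : EuclideanSpace ℝ (Fin p))
    (hfix₁ : IsProxPt γ g ystar xstar)
    (hfix₂ : IsProxPt γ h ((2 : ℝ) • xstar - ystar - γ • gradient f xstar) xstar)
    (y x z : ℕ → EuclideanSpace ℝ (Fin p))
    (hstep : ∀ k, IsSplitStep γ g h f (y k) (x k) (z k))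
    (hupdate : ∀ k, y (k + 1) = y k - x k + z k) :
    ∀ k : ℕ, ‖γ⁻¹ • (x k - z k)‖ ^ 2 ≤
      2 * ‖y 0 - ystar‖ ^ 2 / (γ ^ 2 * (2 - γ * L) * (k + 1)) := by
  have hγL : 0 < 2 - γ * L := by rw [lt_div_iff₀ hL] at hγ2; linarith
  have hfejer (k : ℕ) : ‖y (k + 1) - ystar‖ ^ 2
      ≤ ‖y k - ystar‖ ^ 2 - (2 - γ * L) / 2 * ‖x k - z k‖ ^ 2 := by
    simpa [hupdate] using (hstep k).norm_sub_sq_le hγ hL hg hh hf hfL ⟨hfix₁, hfix₂⟩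
  have hnorm_step (k : ℕ) : ‖y (k + 1) - y k‖ = ‖x k - z k‖ := by
    rw [hupdate, ← norm_neg]; congr 1; abel
  have hanti : Antitone fun k => (2 - γ * L) / 2 * ‖x k - z k‖ ^ 2 := by
    refine antitone_nat_of_succ_le fun k => ?_
    have hk := (hstep (k + 1)).norm_sub_sq_le hγ hL hg hh hf hfL (hstep k)
    rw [← hupdate, ← hupdate, hnorm_step, hnorm_step] at hk
    have hdrop : 0 ≤ (2 - γ * L) / 2 * ‖x (k + 1) - z (k + 1) - (x k - z k)‖ ^ 2 := by
      positivity
    exact mul_le_mul_of_nonneg_left (by linarith) (by positivity)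
  intro k
  have hbound := hanti.add_one_mul_le_of_le_sub (fun k => sq_nonneg ‖y k - ystar‖) hfejer k
  rw [norm_smul, mul_pow, norm_inv, Real.norm_of_nonneg hγ.le, le_div_iff₀ (by positivity)]
  field_simp
  linarith

/-- sublinear convergence of the three-operator splitting. -/
theorem stmt_4 (p : ℕ) (hp : 0 < p) (L : ℝ) (hL : 0 < L) (γ : ℝ)
    (hγ : 0 < γ) (hγ2 : γ < 2 / L)
    (g h f : EuclideanSpace ℝ (Fin p) → ℝ)
    (hg : ConvexOn ℝ Set.univ g) (hh : ConvexOn ℝ Set.univ h)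
    (hf : ConvexOn ℝ Set.univ f) (hfL : LSmooth L f)
    (ystar xstar : EuclideanSpace ℝ (Fin p))
    (hfix₁ : IsProxPt γ g ystar xstar)
    (hfix₂ : IsProxPt γ h ((2 : ℝ) • xstar - ystar - γ • gradient f xstar) xstar)
    (y x z : ℕ → EuclideanSpace ℝ (Fin p))
    (hstep : ∀ k, IsSplitStep γ g h f (y k) (x k) (z k))
    (hupdate : ∀ k, y (k + 1) = y k - x k + z k) :
    ∀ k : ℕ, ‖γ⁻¹ • (x k - z k)‖ ^ 2 ≤
      2 * ‖y 0 - ystar‖ ^ 2 / (γ ^ 2 * (2 - γ * L) * (k + 1)) :=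
  stmt_4_general p L hL γ hγ hγ2 g h f hg hh hf hfL ystar xstar hfix₁ hfix₂ y x z hstep hupdate
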